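/- arXiv:1706.01254 — 5 statements merged into one kernel-verified Lean document; each statement's English description precedes it below -/
import Mathlib

section
/- For every λ ∈ (0,1) and every R > 0, the matrix z_Pe(λ) is a global maximizer of z ↦ g(λ, z) over all 2×2 real matrices. -/
/-!
The objective splits into one term per row of `z`. In a row, with `x = λ z₁ + λ̄ z₂`, the term is
`-(R/2)(z₁ + z₂ - 1)² + A x - B x²` with `B > 0`, so it is at most the maximum `A x₀ - B x₀²` of
the parabola at its vertex `x₀ = A / (2B)`. The row of `z_Pe(λ)` attains this bound: its entries
sum to `1`, killing the penalty, and its `x` is exactly the vertex.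
-/

/-- The Principal's reduced objective `g(λ, z)` in the model with a Planner. -/
noncomputable def g (k11 k12 k21 k22 R lam : ℝ) (z : Fin 2 → Fin 2 → ℝ) : ℝ :=
  -(R / 2) * (z 0 0 + z 0 1 - 1) ^ 2 - (R / 2) * (z 1 0 + z 1 1 - 1) ^ 2
    + (lam * z 0 0 + (1 - lam) * z 0 1) * (1 / (lam * k11) + 1 / ((1 - lam) * k12))
    + (lam * z 1 0 + (1 - lam) * z 1 1) * (1 / ((1 - lam) * k22) + 1 / (lam * k21))
    - (lam * z 0 0 + (1 - lam) * z 0 1) ^ 2 / (2 * lam ^ 2 * k11)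
    - (lam * z 1 0 + (1 - lam) * z 1 1) ^ 2 / (2 * lam ^ 2 * k21)
    - (lam * z 1 0 + (1 - lam) * z 1 1) ^ 2 / (2 * (1 - lam) ^ 2 * k22)
    - (lam * z 0 0 + (1 - lam) * z 0 1) ^ 2 / (2 * (1 - lam) ^ 2 * k12)

/-- The Pareto-optimal sensitivities `z_Pe(λ)`. -/
noncomputable def zPe (k11 k12 k21 k22 lam : ℝ) : Fin 2 → Fin 2 → ℝ :=
  ![![(1 - lam) ^ 2 * k12 / (lam ^ 2 * k11 + (1 - lam) ^ 2 * k12),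
      lam ^ 2 * k11 / (lam ^ 2 * k11 + (1 - lam) ^ 2 * k12)],
    ![(1 - lam) ^ 2 * k22 / (lam ^ 2 * k21 + (1 - lam) ^ 2 * k22),
      lam ^ 2 * k21 / (lam ^ 2 * k21 + (1 - lam) ^ 2 * k22)]]

theorem mul_sub_sq_mul_le_of_eq_two_mul {A B x x₀ : ℝ} (hB : 0 ≤ B) (hA : A = 2 * B * x₀) :
    x * A - x ^ 2 * B ≤ x₀ * A - x₀ ^ 2 * B := by
  subst hA
  nlinarith [mul_nonneg hB (sq_nonneg (x - x₀))]

noncomputable def rowGain (lam a b : ℝ) : ℝ :=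
  1 / (lam * a) + 1 / ((1 - lam) * b)

noncomputable def rowCost (lam a b : ℝ) : ℝ :=
  1 / (2 * lam ^ 2 * a) + 1 / (2 * (1 - lam) ^ 2 * b)

noncomputable def rowObjective (R lam a b z₁ z₂ : ℝ) : ℝ :=
  -(R / 2) * (z₁ + z₂ - 1) ^ 2
    + ((lam * z₁ + (1 - lam) * z₂) * rowGain lam a b
      - (lam * z₁ + (1 - lam) * z₂) ^ 2 * rowCost lam a b)

theorem g_eq_rowObjective_add (k11 k12 k21 k22 R lam : ℝ) (z : Fin 2 → Fin 2 → ℝ) :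
    g k11 k12 k21 k22 R lam z =
      rowObjective R lam k11 k12 (z 0 0) (z 0 1) + rowObjective R lam k21 k22 (z 1 0) (z 1 1) := by
  unfold g rowObjective rowGain rowCost
  ring

theorem rowObjective_le_gain_sub_cost {R : ℝ} (hR : 0 ≤ R) (lam a b z₁ z₂ : ℝ) :
    rowObjective R lam a b z₁ z₂ ≤
      (lam * z₁ + (1 - lam) * z₂) * rowGain lam a b
        - (lam * z₁ + (1 - lam) * z₂) ^ 2 * rowCost lam a b := by
  unfold rowObjective
  nlinarith [mul_nonneg hR (sq_nonneg (z₁ + z₂ - 1))]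

section ParetoRow

variable {lam a b : ℝ}

theorem rowCost_pos (hlam : lam ∈ Set.Ioo (0 : ℝ) 1) (ha : 0 < a) (hb : 0 < b) :
    0 < rowCost lam a b := by
  have := hlam.1
  have := sub_pos.2 hlam.2
  unfold rowCost
  positivity

theorem rowGain_eq_two_mul_rowCost_mul (hlam : lam ∈ Set.Ioo (0 : ℝ) 1) (ha : 0 < a)
    (hb : 0 < b) :
    rowGain lam a b = 2 * rowCost lam a b *
      (lam * ((1 - lam) ^ 2 * b / (lam ^ 2 * a + (1 - lam) ^ 2 * b))
        + (1 - lam) * (lam ^ 2 * a / (lam ^ 2 * a + (1 - lam) ^ 2 * b))) := by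
  have := hlam.1
  have := sub_pos.2 hlam.2
  have hD : lam ^ 2 * a + (1 - lam) ^ 2 * b ≠ 0 := by positivity
  unfold rowGain rowCost
  field_simp
  ring

theorem rowObjective_le_paretoRow (hlam : lam ∈ Set.Ioo (0 : ℝ) 1) (ha : 0 < a) (hb : 0 < b)
    (R : ℝ) (hR : 0 ≤ R) (z₁ z₂ : ℝ) :
    rowObjective R lam a b z₁ z₂ ≤ rowObjective R lam a b
      ((1 - lam) ^ 2 * b / (lam ^ 2 * a + (1 - lam) ^ 2 * b))
      (lam ^ 2 * a / (lam ^ 2 * a + (1 - lam) ^ 2 * b)) := by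
  have := hlam.1
  have := sub_pos.2 hlam.2
  have hD : lam ^ 2 * a + (1 - lam) ^ 2 * b ≠ 0 := by positivity
  have hsum : (1 - lam) ^ 2 * b / (lam ^ 2 * a + (1 - lam) ^ 2 * b)
      + lam ^ 2 * a / (lam ^ 2 * a + (1 - lam) ^ 2 * b) = 1 := by
    rw [← add_div, add_comm, div_self hD]
  calc rowObjective R lam a b z₁ z₂
      ≤ _ := rowObjective_le_gain_sub_cost hR lam a b z₁ z₂
    _ ≤ _ := mul_sub_sq_mul_le_of_eq_two_mul (rowCost_pos hlam ha hb).le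
          (rowGain_eq_two_mul_rowCost_mul hlam ha hb)
    _ = _ := by rw [rowObjective, hsum]; ring

end ParetoRow

/-- for every `λ ∈ (0,1)` and `R > 0`, `z_Pe(λ)` is a global maximizer of
`z ↦ g(λ, z)` over all 2×2 real matrices. -/
theorem zPe_isMaxOn (k11 k12 k21 k22 : ℝ)
    (hk11 : 0 < k11) (hk12 : 0 < k12) (hk21 : 0 < k21) (hk22 : 0 < k22)
    (lam : ℝ) (hlam : lam ∈ Set.Ioo (0 : ℝ) 1) (R : ℝ) (hR : 0 < R) :
    ∀ z : Fin 2 → Fin 2 → ℝ,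
      g k11 k12 k21 k22 R lam z ≤ g k11 k12 k21 k22 R lam (zPe k11 k12 k21 k22 lam) := by
  intro z
  rw [g_eq_rowObjective_add, g_eq_rowObjective_add]
  exact add_le_add (rowObjective_le_paretoRow hlam hk11 hk12 R hR.le _ _)
    (rowObjective_le_paretoRow hlam hk21 hk22 R hR.le _ _)
end

section
/- For every λ ∈ (0,1) with λ ≠ 1/2 and every R > 0, the matrix z_Pe(λ) is the unique global maximizer of z ↦ g(λ, z) over all 2×2 real matrices. -/
lemma quadratic_eq_vertex_sub_sq {c d v : ℝ} (h : c = 2 * d * v) (u : ℝ) :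
    c * u - d * u ^ 2 = c * v - d * v ^ 2 - d * (u - v) ^ 2 := by
  linear_combination (u - v) * h

namespace zPe

noncomputable def rowObj (k k' R lam : ℝ) (x : Fin 2 → ℝ) : ℝ :=
  -(R / 2) * (x 0 + x 1 - 1) ^ 2
    + (lam * x 0 + (1 - lam) * x 1) * (1 / (lam * k) + 1 / ((1 - lam) * k'))
    - (lam * x 0 + (1 - lam) * x 1) ^ 2 / (2 * lam ^ 2 * k)
    - (lam * x 0 + (1 - lam) * x 1) ^ 2 / (2 * (1 - lam) ^ 2 * k')

noncomputable def row (k k' lam : ℝ) : Fin 2 → ℝ :=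
  ![(1 - lam) ^ 2 * k' / (lam ^ 2 * k + (1 - lam) ^ 2 * k'),
    lam ^ 2 * k / (lam ^ 2 * k + (1 - lam) ^ 2 * k')]

lemma g_eq_rowObj_add_rowObj (k11 k12 k21 k22 R lam : ℝ) (z : Fin 2 → Fin 2 → ℝ) :
    g k11 k12 k21 k22 R lam z = rowObj k11 k12 R lam (z 0) + rowObj k21 k22 R lam (z 1) := by
  simp only [g, rowObj]
  ring

section Row

variable {k k' lam : ℝ} (hk : 0 < k) (hk' : 0 < k') (hlam : lam ∈ Set.Ioo 0 1)
include hk hk' hlam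

lemma row_zero_add_row_one : row k k' lam 0 + row k k' lam 1 = 1 := by
  have : 0 < lam ^ 2 * k + (1 - lam) ^ 2 * k' := by
    have := hlam.1
    positivity
  simp only [row, Matrix.cons_val_zero, Matrix.cons_val_one]
  field_simp
  ring

/-- The row of `z_Pe(λ)` puts `λ a + λ̄ b` at the vertex `c / (2d)` of the quadratic in
`rowObj`. -/
lemma coeff_eq_two_mul_curv_mul_row :
    1 / (lam * k) + 1 / ((1 - lam) * k') =
      2 * (1 / (2 * lam ^ 2 * k) + 1 / (2 * (1 - lam) ^ 2 * k'))
        * (lam * row k k' lam 0 + (1 - lam) * row k k' lam 1) := by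
  obtain ⟨hl, hl'⟩ := hlam
  have : 0 < 1 - lam := by linarith
  have : 0 < lam ^ 2 * k + (1 - lam) ^ 2 * k' := by positivity
  simp only [row, Matrix.cons_val_zero, Matrix.cons_val_one]
  field_simp
  ring

lemma rowObj_eq_rowObj_row_sub (R : ℝ) (x : Fin 2 → ℝ) :
    rowObj k k' R lam x = rowObj k k' R lam (row k k' lam)
      - R / 2 * (x 0 + x 1 - 1) ^ 2
      - (1 / (2 * lam ^ 2 * k) + 1 / (2 * (1 - lam) ^ 2 * k'))
        * (lam * x 0 + (1 - lam) * x 1 - (lam * row k k' lam 0 + (1 - lam) * row k k' lam 1)) ^ 2 := by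
  have hsum := row_zero_add_row_one hk hk' hlam
  have hvertex := quadratic_eq_vertex_sub_sq (coeff_eq_two_mul_curv_mul_row hk hk' hlam)
    (lam * x 0 + (1 - lam) * x 1)
  simp only [rowObj, hsum]
  linear_combination hvertex

lemma rowObj_le_rowObj_row {R : ℝ} (hR : 0 ≤ R) (x : Fin 2 → ℝ) :
    rowObj k k' R lam x ≤ rowObj k k' R lam (row k k' lam) := by
  rw [rowObj_eq_rowObj_row_sub hk hk' hlam R x]
  have := hlam.1
  have : 0 ≤ R / 2 * (x 0 + x 1 - 1) ^ 2 := by positivity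
  have : 0 ≤ (1 / (2 * lam ^ 2 * k) + 1 / (2 * (1 - lam) ^ 2 * k'))
      * (lam * x 0 + (1 - lam) * x 1 - (lam * row k k' lam 0 + (1 - lam) * row k k' lam 1)) ^ 2 := by
    positivity
  linarith

lemma eq_row_of_rowObj_row_le {R : ℝ} (hR : 0 < R) (hlam' : lam ≠ 1 / 2) {x : Fin 2 → ℝ}
    (hx : rowObj k k' R lam (row k k' lam) ≤ rowObj k k' R lam x) : x = row k k' lam := by
  rw [rowObj_eq_rowObj_row_sub hk hk' hlam R x] at hx
  set u := lam * row k k' lam 0 + (1 - lam) * row k k' lam 1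
  have hcurv : 0 < 1 / (2 * lam ^ 2 * k) + 1 / (2 * (1 - lam) ^ 2 * k') := by
    have := hlam.1
    positivity
  have hsq₁ : (x 0 + x 1 - 1) ^ 2 = 0 := by
    nlinarith [sq_nonneg (x 0 + x 1 - 1), sq_nonneg (lam * x 0 + (1 - lam) * x 1 - u)]
  have hsq₂ : (lam * x 0 + (1 - lam) * x 1 - u) ^ 2 = 0 := by
    nlinarith [sq_nonneg (x 0 + x 1 - 1), sq_nonneg (lam * x 0 + (1 - lam) * x 1 - u)]
  have hsum : x 0 + x 1 = 1 := by linarith [pow_eq_zero_iff two_ne_zero |>.mp hsq₁]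
  have hmean : lam * x 0 + (1 - lam) * x 1 = u := by
    linarith [pow_eq_zero_iff two_ne_zero |>.mp hsq₂]
  have hsum' := row_zero_add_row_one hk hk' hlam
  -- `a + b` and `λ a + λ̄ b` determine `(a, b)` since the determinant is `1 - 2λ`.
  have hdet : 2 * lam - 1 ≠ 0 := fun h => hlam' (by linarith)
  have h₀ : x 0 = row k k' lam 0 :=
    mul_left_cancel₀ hdet (by linear_combination hmean - (1 - lam) * hsum + (1 - lam) * hsum')
  have h₁ : x 1 = row k k' lam 1 :=
    mul_left_cancel₀ hdet (by linear_combination lam * hsum - lam * hsum' - hmean)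
  ext i
  fin_cases i
  exacts [h₀, h₁]

end Row

end zPe

open zPe in
/-- for every `λ ∈ (0,1)` with `λ ≠ 1/2` and `R > 0`, `z_Pe(λ)` is the unique
global maximizer of `z ↦ g(λ, z)`: it maximizes `g(λ, ·)` and any global maximizer equals it. -/
theorem zPe_unique_maximizer (k11 k12 k21 k22 : ℝ)
    (hk11 : 0 < k11) (hk12 : 0 < k12) (hk21 : 0 < k21) (hk22 : 0 < k22)
    (lam : ℝ) (hlam : lam ∈ Set.Ioo (0 : ℝ) 1) (hlam' : lam ≠ 1 / 2) (R : ℝ) (hR : 0 < R) :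
    (∀ z : Fin 2 → Fin 2 → ℝ,
        g k11 k12 k21 k22 R lam z ≤ g k11 k12 k21 k22 R lam (zPe k11 k12 k21 k22 lam)) ∧
      (∀ z : Fin 2 → Fin 2 → ℝ,
        (∀ w : Fin 2 → Fin 2 → ℝ, g k11 k12 k21 k22 R lam w ≤ g k11 k12 k21 k22 R lam z) →
          z = zPe k11 k12 k21 k22 lam) := by
  have hle₁ := rowObj_le_rowObj_row hk11 hk12 hlam hR.le
  have hle₂ := rowObj_le_rowObj_row hk21 hk22 hlam hR.le
  have hg (z : Fin 2 → Fin 2 → ℝ) := g_eq_rowObj_add_rowObj k11 k12 k21 k22 R lam z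
  have hgPe : g k11 k12 k21 k22 R lam (zPe k11 k12 k21 k22 lam)
      = rowObj k11 k12 R lam (row k11 k12 lam) + rowObj k21 k22 R lam (row k21 k22 lam) :=
    hg _
  refine ⟨fun z => ?_, fun z hz => ?_⟩
  · rw [hg z, hgPe]
    exact add_le_add (hle₁ _) (hle₂ _)
  · have hmax := hz (zPe k11 k12 k21 k22 lam)
    rw [hg z, hgPe] at hmax
    have h₀ := eq_row_of_rowObj_row_le hk11 hk12 hlam hR hlam' (by linarith [hle₂ (z 1)])
    have h₁ := eq_row_of_rowObj_row_le hk21 hk22 hlam hR hlam' (by linarith [hle₁ (z 0)])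
    ext i : 1
    fin_cases i
    exacts [h₀, h₁]
end

section
/- For every R > 0, the function λ ↦ g(λ, z_Pe(λ)) on (0,1) attains its maximum at λ = 1/2: for all λ ∈ (0,1), g(λ, z_Pe(λ)) ≤ 1/(2k11) + 1/(2k12) + 1/(2k21) + 1/(2k22), with equality if and only if λ = 1/2. -/
/-!
Each row of `g` is `-(R/2)(z_{i1} + z_{i2} - 1)² + rowPayoff k_{i1} k_{i2} λ x_i`, where
`x_i = λ z_{i1} + λ̄ z_{i2}` and `rowPayoff` is a concave quadratic in `x_i`. The Pareto row
sums to `1`, so the penalty vanishes, and its effective sensitivity `λ λ̄ (λ k₁ + λ̄ k₂) / D`,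
`D = λ² k₁ + λ̄² k₂`, is the vertex of the quadratic, giving the value
`(λ k₁ + λ̄ k₂)² / (2 k₁ k₂ D)`. The identity `(k₁ + k₂) D - (λ k₁ + λ̄ k₂)² = k₁ k₂ (2λ - 1)²`
turns this into `1/(2k₁) + 1/(2k₂) - (2λ - 1)² / (2D)`, which is maximal exactly at `λ = 1/2`.
-/

noncomputable def rowPayoff (k1 k2 lam x : ℝ) : ℝ :=
  x * (1 / (lam * k1) + 1 / ((1 - lam) * k2)) - x ^ 2 / (2 * lam ^ 2 * k1)
    - x ^ 2 / (2 * (1 - lam) ^ 2 * k2)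

noncomputable def paretoRow (k1 k2 lam : ℝ) : Fin 2 → ℝ :=
  ![(1 - lam) ^ 2 * k2 / (lam ^ 2 * k1 + (1 - lam) ^ 2 * k2),
    lam ^ 2 * k1 / (lam ^ 2 * k1 + (1 - lam) ^ 2 * k2)]

theorem zPe_eq_paretoRow (k11 k12 k21 k22 lam : ℝ) :
    zPe k11 k12 k21 k22 lam = ![paretoRow k11 k12 lam, paretoRow k21 k22 lam] :=
  rfl

theorem g_of_rows (k11 k12 k21 k22 R lam : ℝ) (r₁ r₂ : Fin 2 → ℝ) :
    g k11 k12 k21 k22 R lam ![r₁, r₂]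
      = -(R / 2) * (r₁ 0 + r₁ 1 - 1) ^ 2 - (R / 2) * (r₂ 0 + r₂ 1 - 1) ^ 2
        + rowPayoff k11 k12 lam (lam * r₁ 0 + (1 - lam) * r₁ 1)
        + rowPayoff k21 k22 lam (lam * r₂ 0 + (1 - lam) * r₂ 1) := by
  simp only [g, rowPayoff, Matrix.cons_val_zero, Matrix.cons_val_one]
  ring

section ParetoRow

variable {k1 k2 lam : ℝ}

theorem paretoDenom_pos (hk1 : 0 < k1) (hk2 : 0 < k2) (hlam : lam ∈ Set.Ioo (0 : ℝ) 1) :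
    0 < lam ^ 2 * k1 + (1 - lam) ^ 2 * k2 := by
  have : 0 < 1 - lam := sub_pos.mpr hlam.2
  have := hlam.1
  positivity

theorem paretoRow_sum_eq_one (hk1 : 0 < k1) (hk2 : 0 < k2) (hlam : lam ∈ Set.Ioo (0 : ℝ) 1) :
    paretoRow k1 k2 lam 0 + paretoRow k1 k2 lam 1 = 1 := by
  have hD := (paretoDenom_pos hk1 hk2 hlam).ne'
  simp only [paretoRow, Matrix.cons_val_zero, Matrix.cons_val_one]
  field_simp
  ring

theorem rowPayoff_paretoRow (hk1 : 0 < k1) (hk2 : 0 < k2) (hlam : lam ∈ Set.Ioo (0 : ℝ) 1) :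
    rowPayoff k1 k2 lam (lam * paretoRow k1 k2 lam 0 + (1 - lam) * paretoRow k1 k2 lam 1)
      = 1 / (2 * k1) + 1 / (2 * k2)
        - (2 * lam - 1) ^ 2 / (2 * (lam ^ 2 * k1 + (1 - lam) ^ 2 * k2)) := by
  obtain ⟨hl0, hl1⟩ := hlam
  have hl1' : 1 - lam ≠ 0 := (sub_pos.mpr hl1).ne'
  have hD := (paretoDenom_pos hk1 hk2 ⟨hl0, hl1⟩).ne'
  have hx : lam * paretoRow k1 k2 lam 0 + (1 - lam) * paretoRow k1 k2 lam 1
      = lam * (1 - lam) * (lam * k1 + (1 - lam) * k2)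
          / (lam ^ 2 * k1 + (1 - lam) ^ 2 * k2) := by
    simp only [paretoRow, Matrix.cons_val_zero, Matrix.cons_val_one]
    field_simp
    ring
  rw [hx, rowPayoff]
  field_simp
  ring

end ParetoRow

theorem sub_sq_mul_le_and_eq_iff (S c lam : ℝ) (hc : 0 < c) :
    S - (2 * lam - 1) ^ 2 * c ≤ S ∧ (S - (2 * lam - 1) ^ 2 * c = S ↔ lam = 1 / 2) := by
  refine ⟨by nlinarith [sq_nonneg (2 * lam - 1)], ?_⟩
  rw [sub_eq_self, mul_eq_zero, or_iff_left hc.ne', sq_eq_zero_iff, sub_eq_zero]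
  constructor <;> intro h <;> linarith

theorem g_zPe_max_at_half_general (k11 k12 k21 k22 : ℝ)
    (hk11 : 0 < k11) (hk12 : 0 < k12) (hk21 : 0 < k21) (hk22 : 0 < k22)
    (R : ℝ) :
    ∀ lam ∈ Set.Ioo (0 : ℝ) 1,
      g k11 k12 k21 k22 R lam (zPe k11 k12 k21 k22 lam)
          ≤ 1 / (2 * k11) + 1 / (2 * k12) + 1 / (2 * k21) + 1 / (2 * k22) ∧
        (g k11 k12 k21 k22 R lam (zPe k11 k12 k21 k22 lam)
            = 1 / (2 * k11) + 1 / (2 * k12) + 1 / (2 * k21) + 1 / (2 * k22) ↔ lam = 1 / 2) := by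
  intro lam hlam
  have hD₁ := paretoDenom_pos hk11 hk12 hlam
  have hD₂ := paretoDenom_pos hk21 hk22 hlam
  have hg : g k11 k12 k21 k22 R lam (zPe k11 k12 k21 k22 lam)
      = 1 / (2 * k11) + 1 / (2 * k12) + 1 / (2 * k21) + 1 / (2 * k22)
        - (2 * lam - 1) ^ 2 * (1 / (2 * (lam ^ 2 * k11 + (1 - lam) ^ 2 * k12))
            + 1 / (2 * (lam ^ 2 * k21 + (1 - lam) ^ 2 * k22))) := by
    rw [zPe_eq_paretoRow, g_of_rows, paretoRow_sum_eq_one hk11 hk12 hlam,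
      paretoRow_sum_eq_one hk21 hk22 hlam, rowPayoff_paretoRow hk11 hk12 hlam,
      rowPayoff_paretoRow hk21 hk22 hlam]
    ring
  rw [hg]
  exact sub_sq_mul_le_and_eq_iff _ _ _ (by positivity)

/-- for every `R > 0`, the function `λ ↦ g(λ, z_Pe(λ))` on `(0,1)` attains its
maximum at `λ = 1/2`: it is `≤ 1/(2 k11) + 1/(2 k12) + 1/(2 k21) + 1/(2 k22)` everywhere, with
equality iff `λ = 1/2`. -/
theorem g_zPe_max_at_half (k11 k12 k21 k22 : ℝ)
    (hk11 : 0 < k11) (hk12 : 0 < k12) (hk21 : 0 < k21) (hk22 : 0 < k22)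
    (R : ℝ) (hR : 0 < R) :
    ∀ lam ∈ Set.Ioo (0 : ℝ) 1,
      g k11 k12 k21 k22 R lam (zPe k11 k12 k21 k22 lam)
          ≤ 1 / (2 * k11) + 1 / (2 * k12) + 1 / (2 * k21) + 1 / (2 * k22) ∧
        (g k11 k12 k21 k22 R lam (zPe k11 k12 k21 k22 lam)
            = 1 / (2 * k11) + 1 / (2 * k12) + 1 / (2 * k21) + 1 / (2 * k22) ↔ lam = 1 / 2) :=
  g_zPe_max_at_half_general k11 k12 k21 k22 hk11 hk12 hk21 hk22 R
end

section
/- For every R > 0, the strict inequality g_NA(z_NA(R), R) < 1/(2k11) + 1/(2k12) + 1/(2k21) + 1/(2k22) holds; consequently there exists a nonempty open interval Λ ⊆ (0,1) containing 1/2 such that g_NA(z_NA(R), R) ≤ g(λ, z_Pe(λ)) for every λ ∈ Λ (i.e. adding a Planner with Pareto parameter λ ∈ Λ improves the value of the Principal compared to the no-Planner model). -/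
/-- The Principal's reduced objective `g_NA(z, R)` in the no-Planner (Nash) model. -/
noncomputable def gNA (k11 k12 k21 k22 : ℝ) (z : Fin 2 → Fin 2 → ℝ) (R : ℝ) : ℝ :=
  -(R / 2) * (z 0 0 + z 0 1 - 1) ^ 2 - (R / 2) * (z 1 0 + z 1 1 - 1) ^ 2
    + z 0 0 / k11 + z 0 1 / k12 + z 1 0 / k21 + z 1 1 / k22
    - (z 0 0) ^ 2 / (2 * k11) - (z 0 1) ^ 2 / (2 * k12)
    - (z 1 0) ^ 2 / (2 * k21) - (z 1 1) ^ 2 / (2 * k22)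

/-- The optimal sensitivities `z_NA(R)` in the no-Planner (Nash) model. -/
noncomputable def zNA (k11 k12 k21 k22 R : ℝ) : Fin 2 → Fin 2 → ℝ :=
  ![![(1 + R * k12) / (1 + R * (k11 + k12)), (1 + R * k11) / (1 + R * (k11 + k12))],
    ![(1 + R * k22) / (1 + R * (k21 + k22)), (1 + R * k21) / (1 + R * (k21 + k22))]]

open Filter Topology

/-! The bound `1/(2k11) + 1/(2k12) + 1/(2k21) + 1/(2k22)` is the value of `g_NA` without the
risk penalty, attained only at `z = 1`; since the rows of `z_NA(R)` do not sum to `1`, the penalty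
is strictly positive there. At `λ = 1/2` the Planner attains exactly this bound with `z_Pe(1/2)`,
so by continuity of `λ ↦ g(λ, z_Pe(λ))` the Planner beats the Nash value near `1/2`. -/

noncomputable def gNARow (k₁ k₂ R x y : ℝ) : ℝ :=
  -(R / 2) * (x + y - 1) ^ 2 + x / k₁ + y / k₂ - x ^ 2 / (2 * k₁) - y ^ 2 / (2 * k₂)

lemma gNA_eq_gNARow_add_gNARow (k11 k12 k21 k22 R : ℝ) (z : Fin 2 → Fin 2 → ℝ) :
    gNA k11 k12 k21 k22 z R
      = gNARow k11 k12 R (z 0 0) (z 0 1) + gNARow k21 k22 R (z 1 0) (z 1 1) := by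
  unfold gNA gNARow
  ring

lemma div_sub_sq_div_le {k : ℝ} (hk : 0 < k) (x : ℝ) :
    x / k - x ^ 2 / (2 * k) ≤ 1 / (2 * k) := by
  have h : 1 / (2 * k) - (x / k - x ^ 2 / (2 * k)) = (x - 1) ^ 2 / (2 * k) := by
    field_simp
    ring
  linarith [div_nonneg (sq_nonneg (x - 1)) (by positivity : (0 : ℝ) ≤ 2 * k)]

lemma gNARow_lt {k₁ k₂ R x y : ℝ} (hk₁ : 0 < k₁) (hk₂ : 0 < k₂) (hR : 0 < R)
    (hxy : x + y ≠ 1) :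
    gNARow k₁ k₂ R x y < 1 / (2 * k₁) + 1 / (2 * k₂) := by
  have hpen : 0 < R / 2 * (x + y - 1) ^ 2 :=
    mul_pos (half_pos hR) (sq_pos_of_ne_zero (sub_ne_zero.mpr hxy))
  unfold gNARow
  linarith [div_sub_sq_div_le hk₁ x, div_sub_sq_div_le hk₂ y]

/-- If `1 + R (k₁ + k₂) = 0`, both entries are the junk value `x / 0 = 0`. -/
lemma zNA_row_sum_ne_one (k₁ k₂ R : ℝ) :
    (1 + R * k₂) / (1 + R * (k₁ + k₂)) + (1 + R * k₁) / (1 + R * (k₁ + k₂)) ≠ 1 := by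
  rcases eq_or_ne (1 + R * (k₁ + k₂)) 0 with hD | hD
  · simp [hD]
  · rw [← add_div, ne_eq, div_eq_one_iff_eq hD]
    intro h
    linarith

lemma gNA_zNA_lt {k11 k12 k21 k22 R : ℝ} (hk11 : 0 < k11) (hk12 : 0 < k12) (hk21 : 0 < k21)
    (hk22 : 0 < k22) (hR : 0 < R) :
    gNA k11 k12 k21 k22 (zNA k11 k12 k21 k22 R) R
      < 1 / (2 * k11) + 1 / (2 * k12) + 1 / (2 * k21) + 1 / (2 * k22) := by
  rw [gNA_eq_gNARow_add_gNARow]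
  have h₁ := gNARow_lt hk11 hk12 hR (zNA_row_sum_ne_one k11 k12 R)
  have h₂ := gNARow_lt hk21 hk22 hR (zNA_row_sum_ne_one k21 k22 R)
  simp only [zNA, Matrix.cons_val_zero, Matrix.cons_val_one, Matrix.cons_val_fin_one]
  linarith

lemma g_half_zPe_half {k11 k12 k21 k22 : ℝ} (hk11 : 0 < k11) (hk12 : 0 < k12) (hk21 : 0 < k21)
    (hk22 : 0 < k22) (R : ℝ) :
    g k11 k12 k21 k22 R (1 / 2) (zPe k11 k12 k21 k22 (1 / 2))
      = 1 / (2 * k11) + 1 / (2 * k12) + 1 / (2 * k21) + 1 / (2 * k22) := by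
  have h₁ : k11 + k12 ≠ 0 := by positivity
  have h₂ : k21 + k22 ≠ 0 := by positivity
  simp only [g, zPe, Matrix.cons_val_zero, Matrix.cons_val_one, Matrix.cons_val_fin_one]
  norm_num
  field_simp
  ring

lemma continuousAt_g_zPe_half {k11 k12 k21 k22 : ℝ} (hk11 : 0 < k11) (hk12 : 0 < k12)
    (hk21 : 0 < k21) (hk22 : 0 < k22) (R : ℝ) :
    ContinuousAt (fun lam => g k11 k12 k21 k22 R lam (zPe k11 k12 k21 k22 lam)) (1 / 2) := by
  simp only [g, zPe, Matrix.cons_val_zero, Matrix.cons_val_one, Matrix.cons_val_fin_one]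
  fun_prop (disch := norm_num; positivity)

/-- for every `R > 0`, `g_NA(z_NA(R), R) < 1/(2 k11) + 1/(2 k12) + 1/(2 k21)
+ 1/(2 k22)`; consequently there is a nonempty open interval `Λ = (a, b) ⊆ (0,1)` containing
`1/2` such that `g_NA(z_NA(R), R) ≤ g(λ, z_Pe(λ))` for every `λ ∈ Λ` (adding a Planner with
Pareto parameter in `Λ` improves the value of the Principal). -/
theorem planner_improves_principal (k11 k12 k21 k22 : ℝ)
    (hk11 : 0 < k11) (hk12 : 0 < k12) (hk21 : 0 < k21) (hk22 : 0 < k22)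
    (R : ℝ) (hR : 0 < R) :
    gNA k11 k12 k21 k22 (zNA k11 k12 k21 k22 R) R
        < 1 / (2 * k11) + 1 / (2 * k12) + 1 / (2 * k21) + 1 / (2 * k22) ∧
      ∃ a b : ℝ, a < 1 / 2 ∧ (1 : ℝ) / 2 < b ∧ Set.Ioo a b ⊆ Set.Ioo (0 : ℝ) 1 ∧
        ∀ lam ∈ Set.Ioo a b,
          gNA k11 k12 k21 k22 (zNA k11 k12 k21 k22 R) R
            ≤ g k11 k12 k21 k22 R lam (zPe k11 k12 k21 k22 lam) := by
  have hlt := gNA_zNA_lt hk11 hk12 hk21 hk22 hR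
  refine ⟨hlt, ?_⟩
  have hbeats : ∀ᶠ lam in 𝓝 (1 / 2 : ℝ), gNA k11 k12 k21 k22 (zNA k11 k12 k21 k22 R) R
      < g k11 k12 k21 k22 R lam (zPe k11 k12 k21 k22 lam) :=
    (continuousAt_g_zPe_half hk11 hk12 hk21 hk22 R).eventually_const_lt
      (hlt.trans_eq (g_half_zPe_half hk11 hk12 hk21 hk22 R).symm)
  have hmem := hbeats.and
    (Ioo_mem_nhds (by norm_num : (0 : ℝ) < 1 / 2) (by norm_num : (1 : ℝ) / 2 < 1))
  obtain ⟨a, b, ⟨ha, hb⟩, hab⟩ := mem_nhds_iff_exists_Ioo_subset.mp hmem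
  exact ⟨a, b, ha, hb, fun lam hlam => (hab hlam).2, fun lam hlam => (hab hlam).1.le⟩
end

section
/- The quantity E := (k12/(k11+k12))/k11 · (1 − k12/(2(k11+k12))) + (k11/(k11+k12))/k12 · (1 − k11/(2(k11+k12))) + (k22/(k22+k21))/k21 · (1 − k22/(2(k22+k21))) + (k21/(k22+k21))/k22 · (1 − k21/(2(k22+k21))) satisfies both strict inequalities E > 1/(2k11) + 1/(2k21) and E > 1/(2k22) + 1/(2k12). -/
/-!
Each half of `E` is a value `pairValue a b` that simplifies to `1/(2a) + 1/(2b) - 1/(2(a+b))`.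
Since `1/(2(a+b))` is smaller than both `1/(2a)` and `1/(2b)`, this exceeds each of `1/(2a)` and
`1/(2b)`; adding the bounds for the pairs `(k11, k12)` and `(k22, k21)` gives both inequalities.
-/

noncomputable def pairValue (a b : ℝ) : ℝ :=
  (b / (a + b)) / a * (1 - b / (2 * (a + b))) + (a / (a + b)) / b * (1 - a / (2 * (a + b)))

lemma pairValue_eq (a b : ℝ) (ha : a ≠ 0) (hb : b ≠ 0) (hab : a + b ≠ 0) :
    pairValue a b = 1 / (2 * a) + 1 / (2 * b) - 1 / (2 * (a + b)) := by
  unfold pairValue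
  field_simp
  ring

lemma one_div_two_mul_left_lt_pairValue {a b : ℝ} (ha : 0 < a) (hb : 0 < b) :
    1 / (2 * a) < pairValue a b := by
  have : 1 / (2 * (a + b)) < 1 / (2 * b) := by gcongr; linarith
  rw [pairValue_eq a b ha.ne' hb.ne' (by positivity)]
  linarith

lemma one_div_two_mul_right_lt_pairValue {a b : ℝ} (ha : 0 < a) (hb : 0 < b) :
    1 / (2 * b) < pairValue a b := by
  have : 1 / (2 * (a + b)) < 1 / (2 * a) := by gcongr; linarith
  rw [pairValue_eq a b ha.ne' hb.ne' (by positivity)]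
  linarith

/-- the limiting value
`E := (k12/(k11+k12))/k11 (1 − k12/(2(k11+k12))) + (k11/(k11+k12))/k12 (1 − k11/(2(k11+k12)))
  + (k22/(k22+k21))/k21 (1 − k22/(2(k22+k21))) + (k21/(k22+k21))/k22 (1 − k21/(2(k22+k21)))`
satisfies `E > 1/(2 k11) + 1/(2 k21)` and `E > 1/(2 k22) + 1/(2 k12)`. -/
theorem limit_value_gt_weak_pareto (k11 k12 k21 k22 : ℝ)
    (hk11 : 0 < k11) (hk12 : 0 < k12) (hk21 : 0 < k21) (hk22 : 0 < k22) :
    1 / (2 * k11) + 1 / (2 * k21)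
        < (k12 / (k11 + k12)) / k11 * (1 - k12 / (2 * (k11 + k12)))
          + (k11 / (k11 + k12)) / k12 * (1 - k11 / (2 * (k11 + k12)))
          + (k22 / (k22 + k21)) / k21 * (1 - k22 / (2 * (k22 + k21)))
          + (k21 / (k22 + k21)) / k22 * (1 - k21 / (2 * (k22 + k21))) ∧
      1 / (2 * k22) + 1 / (2 * k12)
        < (k12 / (k11 + k12)) / k11 * (1 - k12 / (2 * (k11 + k12)))
          + (k11 / (k11 + k12)) / k12 * (1 - k11 / (2 * (k11 + k12)))
          + (k22 / (k22 + k21)) / k21 * (1 - k22 / (2 * (k22 + k21)))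
          + (k21 / (k22 + k21)) / k22 * (1 - k21 / (2 * (k22 + k21))) := by
  have h11 := one_div_two_mul_left_lt_pairValue hk11 hk12
  have h12 := one_div_two_mul_right_lt_pairValue hk11 hk12
  have h22 := one_div_two_mul_left_lt_pairValue hk22 hk21
  have h21 := one_div_two_mul_right_lt_pairValue hk22 hk21
  unfold pairValue at h11 h12 h22 h21
  constructor <;> linarith
end
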